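/- arXiv:1910.03638 — 6 statements merged into one kernel-verified Lean document; each statement's English description precedes it below -/
import Mathlib

section
/- Let h : ℝᵈ → ℝ be convex and continuously differentiable and let g : ℝᵈ → ℝ be continuously differentiable. If L·h - g and L·h + g are both convex on ℝᵈ for some L > 0, then for all x, y ∈ ℝᵈ, |g(x) - g(y) - ⟨∇g(y), x - y⟩| ≤ L·D_h(x, y), where D_h(x,y) = h(x) - h(y) - ⟨∇h(y), x - y⟩. -/
/-!
A convex function lies above its tangent planes. Applied to `L h - g` and `L h + g` at `y`,
this gives the two one-sided bounds `± (g x - g y - ⟪∇g y, x - y⟫) ≤ L D_h(x, y)`.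
-/

open Set

theorem ConvexOn.add_fderiv_sub_le {E : Type*} [NormedAddCommGroup E] [NormedSpace ℝ E]
    {s : Set E} {f : E → ℝ} {f' : E →L[ℝ] ℝ} {x y : E} (hf : ConvexOn ℝ s f)
    (hx : x ∈ s) (hy : y ∈ s) (hf' : HasFDerivAt f f' y) :
    f y + f' (x - y) ≤ f x := by
  let A : ℝ →ᵃ[ℝ] E := AffineMap.lineMap y x
  have hA0 : A 0 = y := AffineMap.lineMap_apply_zero y x
  have hA1 : A 1 = x := AffineMap.lineMap_apply_one y x
  have hline : ConvexOn ℝ (A ⁻¹' s) (f ∘ A) := hf.comp_affineMap A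
  have hderiv : HasDerivAt (f ∘ A) (f' (x - y)) 0 :=
    (hA0 ▸ hf').comp_hasDerivAt 0 AffineMap.hasDerivAt_lineMap
  have hslope := hline.le_slope_of_hasDerivAt (by simpa [hA0] using hy)
    (by simpa [hA1] using hx) one_pos hderiv
  simp only [slope_def_field, Function.comp_apply, hA0, hA1, sub_zero, div_one] at hslope
  linarith

theorem stmt1_general {d : ℕ} (h g : EuclideanSpace ℝ (Fin d) → ℝ) (L : ℝ)
    (hC1 : ContDiff ℝ 1 h) (gC1 : ContDiff ℝ 1 g)
    (hc1 : ConvexOn ℝ Set.univ (fun x => L * h x - g x))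
    (hc2 : ConvexOn ℝ Set.univ (fun x => L * h x + g x)) :
    ∀ x y : EuclideanSpace ℝ (Fin d),
      |g x - g y - (inner ℝ (gradient g y) (x - y) : ℝ)| ≤
        L * (h x - h y - (inner ℝ (gradient h y) (x - y) : ℝ)) := by
  intro x y
  have hh := (hC1.differentiable one_ne_zero y).hasGradientAt.hasFDerivAt
  have hg := (gC1.differentiable one_ne_zero y).hasGradientAt.hasFDerivAt
  have below_sub := hc1.add_fderiv_sub_le (mem_univ x) (mem_univ y) ((hh.const_mul L).sub hg)
  have below_add := hc2.add_fderiv_sub_le (mem_univ x) (mem_univ y) ((hh.const_mul L).add hg)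
  simp only [sub_apply, add_apply, smul_apply, smul_eq_mul,
    InnerProductSpace.toDual_apply_apply] at below_sub below_add
  rw [abs_le]
  constructor <;> linarith

/-- Extended Descent Lemma, forward direction. -/
theorem stmt1 {d : ℕ} (h g : EuclideanSpace ℝ (Fin d) → ℝ) (L : ℝ)
    (hconv : ConvexOn ℝ Set.univ h) (hC1 : ContDiff ℝ 1 h) (gC1 : ContDiff ℝ 1 g)
    (hL : 0 < L)
    (hc1 : ConvexOn ℝ Set.univ (fun x => L * h x - g x))
    (hc2 : ConvexOn ℝ Set.univ (fun x => L * h x + g x)) :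
    ∀ x y : EuclideanSpace ℝ (Fin d),
      |g x - g y - (inner ℝ (gradient g y) (x - y) : ℝ)| ≤
        L * (h x - h y - (inner ℝ (gradient h y) (x - y) : ℝ)) :=
  stmt1_general h g L hC1 gC1 hc1 hc2
end

section
/- Conversely, if for all x, y ∈ ℝᵈ we have |g(x) - g(y) - ⟨∇g(y), x - y⟩| ≤ L·D_h(x,y), then L·h - g and L·h + g are convex on ℝᵈ. -/
/-! The two halves of the absolute-value bound give, at every `y`, an affine minorant of
`L * h ∓ g` with slope `L • ∇h y ∓ ∇g y` touching it at `y`; a function with such a minorant at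
each point of a convex set is convex there. -/

theorem ConvexOn.of_forall_add_inner_le {E : Type*} [NormedAddCommGroup E]
    [InnerProductSpace ℝ E] {s : Set E} {f : E → ℝ} (v : E → E) (hs : Convex ℝ s)
    (hf : ∀ x ∈ s, ∀ y ∈ s, f y + inner ℝ (v y) (x - y) ≤ f x) :
    ConvexOn ℝ s f := by
  refine ⟨hs, fun x hx y hy a b ha hb hab => ?_⟩
  set z := a • x + b • y
  have hz : z ∈ s := hs hx hy ha hb hab
  have hcomb : a • (x - z) + b • (y - z) = 0 := by
    rw [smul_sub, smul_sub, sub_add_sub_comm, ← add_smul, hab, one_smul, sub_self]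
  calc f z = a * (f z + inner ℝ (v z) (x - z)) + b * (f z + inner ℝ (v z) (y - z)) := by
        rw [mul_add, mul_add, add_add_add_comm, ← real_inner_smul_right,
          ← real_inner_smul_right, ← inner_add_right, hcomb, inner_zero_right, add_zero,
          ← add_mul, hab, one_mul]
    _ ≤ a * f x + b * f y := by
        gcongr
        exacts [hf x hx z hz, hf y hy z hz]

theorem stmt2_general {d : ℕ} (h g : EuclideanSpace ℝ (Fin d) → ℝ) (L : ℝ)
    (hub : ∀ x y : EuclideanSpace ℝ (Fin d),
      |g x - g y - (inner ℝ (gradient g y) (x - y) : ℝ)| ≤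
        L * (h x - h y - (inner ℝ (gradient h y) (x - y) : ℝ))) :
    ConvexOn ℝ Set.univ (fun x => L * h x - g x) ∧
      ConvexOn ℝ Set.univ (fun x => L * h x + g x) := by
  have hbounds x y := abs_le.mp (hub x y)
  constructor
  · refine .of_forall_add_inner_le (fun y => L • gradient h y - gradient g y) convex_univ
      fun x _ y _ => ?_
    rw [inner_sub_left, real_inner_smul_left]
    linarith [hbounds x y]
  · refine .of_forall_add_inner_le (fun y => L • gradient h y + gradient g y) convex_univ
      fun x _ y _ => ?_
    rw [inner_add_left, real_inner_smul_left]
    linarith [hbounds x y]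

/-- Extended Descent Lemma, converse direction. -/
theorem stmt2 {d : ℕ} (h g : EuclideanSpace ℝ (Fin d) → ℝ) (L : ℝ)
    (hconv : ConvexOn ℝ Set.univ h) (hC1 : ContDiff ℝ 1 h) (gC1 : ContDiff ℝ 1 g)
    (hL : 0 < L)
    (hub : ∀ x y : EuclideanSpace ℝ (Fin d),
      |g x - g y - (inner ℝ (gradient g y) (x - y) : ℝ)| ≤
        L * (h x - h y - (inner ℝ (gradient h y) (x - y) : ℝ))) :
    ConvexOn ℝ Set.univ (fun x => L * h x - g x) ∧
      ConvexOn ℝ Set.univ (fun x => L * h x + g x) :=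
  stmt2_general h g L hub
end

section
/- Let Q ∈ ℝ^{A×B}, t₀ > 0, t ≥ 0. Then min over X ∈ ℝ^{A×B} with ‖X‖_F ≤ t of ⟨Q, X⟩ + t₀‖X‖₁ equals -t‖S_{t₀}(-Q)‖_F, where S_{t₀} is the entrywise soft-thresholding operator S_θ(x) = max(|x| - θ, 0)·sgn(x). Moreover, if ‖S_{t₀}(-Q)‖_F ≠ 0 the minimizer is X* = t·S_{t₀}(-Q)/‖S_{t₀}(-Q)‖_F. -/
/-- Frobenius norm of a real matrix. -/
noncomputable def frob {A B : ℕ} (Q : Matrix (Fin A) (Fin B) ℝ) : ℝ :=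
  Real.sqrt (∑ i, ∑ j, (Q i j) ^ 2)

/-- Frobenius (trace) inner product of real matrices. -/
def mip {A B : ℕ} (Q X : Matrix (Fin A) (Fin B) ℝ) : ℝ :=
  ∑ i, ∑ j, Q i j * X i j

/-- Entrywise L1 norm of a matrix. -/
def l1 {A B : ℕ} (X : Matrix (Fin A) (Fin B) ℝ) : ℝ :=
  ∑ i, ∑ j, |X i j|

/-- Entrywise soft-thresholding operator `S_θ(x) = max(|x|-θ,0) sgn(x)`. -/
noncomputable def soft (θ : ℝ) {A B : ℕ} (Q : Matrix (Fin A) (Fin B) ℝ) :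
    Matrix (Fin A) (Fin B) ℝ :=
  fun i j => max (|Q i j| - θ) 0 * Real.sign (Q i j)

/-! Entrywise, `|S_{t₀}(-q)| + t₀ ≥ |q|`, so `q x + t₀ |x| ≥ -|S_{t₀}(-q)| |x|`; summing and applying
Cauchy–Schwarz bounds the objective below by `-‖S‖_F ‖X‖_F ≥ -t ‖S‖_F`, where `S = S_{t₀}(-Q)`.
At `X = S` the entrywise bound is an equality, `⟨Q, S⟩ + t₀ ‖S‖₁ = -‖S‖_F²`, and the objective is
positively homogeneous, so the multiple of `S` of Frobenius norm `t` attains the bound. -/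

noncomputable def softThreshold (θ p : ℝ) : ℝ := max (|p| - θ) 0 * Real.sign p

lemma soft_apply {A B : ℕ} (θ : ℝ) (Q : Matrix (Fin A) (Fin B) ℝ) (i : Fin A) (j : Fin B) :
    soft θ Q i j = softThreshold θ (Q i j) := rfl

section Scalar

variable {θ : ℝ} (p : ℝ)

lemma abs_softThreshold (hθ : 0 ≤ θ) : |softThreshold θ p| = max (|p| - θ) 0 := by
  rcases lt_trichotomy p 0 with hp | rfl | hp
  · simp [softThreshold, Real.sign_of_neg hp]
  · simp [softThreshold, hθ]
  · simp [softThreshold, Real.sign_of_pos hp]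

lemma abs_le_abs_softThreshold_add (hθ : 0 ≤ θ) : |p| ≤ |softThreshold θ p| + θ := by
  rw [abs_softThreshold p hθ]
  linarith [le_max_left (|p| - θ) 0]

lemma mul_softThreshold_sub_mul_abs (θ : ℝ) :
    p * softThreshold θ p - θ * |softThreshold θ p| = softThreshold θ p ^ 2 := by
  set m := max (|p| - θ) 0
  have hm : 0 ≤ m := le_max_right _ _
  have hm_sq : (|p| - θ) * m = m ^ 2 := by
    rcases le_total (|p| - θ) 0 with h | h
    · simp [m, max_eq_right h]
    · simp only [m, max_eq_left h]; ring
  rcases lt_trichotomy p 0 with hp | rfl | hp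
  · simp only [softThreshold, Real.sign_of_neg hp]
    rw [abs_of_neg hp] at hm_sq
    rw [mul_neg_one, abs_neg, abs_of_nonneg hm]
    linear_combination hm_sq
  · simp [softThreshold]
  · simp only [softThreshold, Real.sign_of_pos hp]
    rw [abs_of_pos hp] at hm_sq
    rw [mul_one, abs_of_nonneg hm]
    linear_combination hm_sq

end Scalar

section Matrix

variable {A B : ℕ}

lemma frob_nonneg (X : Matrix (Fin A) (Fin B) ℝ) : 0 ≤ frob X := Real.sqrt_nonneg _

lemma frob_sq (X : Matrix (Fin A) (Fin B) ℝ) : frob X ^ 2 = ∑ i, ∑ j, X i j ^ 2 :=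
  Real.sq_sqrt (by positivity)

lemma frob_smul {c : ℝ} (hc : 0 ≤ c) (X : Matrix (Fin A) (Fin B) ℝ) :
    frob (c • X) = c * frob X := by
  simp only [frob, Matrix.smul_apply, smul_eq_mul, mul_pow, ← Finset.mul_sum]
  rw [Real.sqrt_mul (sq_nonneg c), Real.sqrt_sq hc]

lemma mip_smul_right (c : ℝ) (Q X : Matrix (Fin A) (Fin B) ℝ) :
    mip Q (c • X) = c * mip Q X := by
  simp only [mip, Matrix.smul_apply, smul_eq_mul, Finset.mul_sum, mul_left_comm]

lemma l1_smul {c : ℝ} (hc : 0 ≤ c) (X : Matrix (Fin A) (Fin B) ℝ) :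
    l1 (c • X) = c * l1 X := by
  simp only [l1, Matrix.smul_apply, smul_eq_mul, abs_mul, abs_of_nonneg hc, Finset.mul_sum]

lemma sum_abs_mul_abs_le_frob_mul_frob (X Y : Matrix (Fin A) (Fin B) ℝ) :
    ∑ i, ∑ j, |X i j| * |Y i j| ≤ frob X * frob Y := by
  simpa only [frob, ← Fintype.sum_prod_type', sq_abs] using
    Real.sum_mul_le_sqrt_mul_sqrt Finset.univ (fun p : Fin A × Fin B => |X p.1 p.2|)
      (fun p => |Y p.1 p.2|)

lemma neg_frob_soft_neg_mul_frob_le {θ : ℝ} (hθ : 0 ≤ θ) (Q X : Matrix (Fin A) (Fin B) ℝ) :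
    -(frob (soft θ (-Q)) * frob X) ≤ mip Q X + θ * l1 X := by
  have hentry : ∀ i j, -(|soft θ (-Q) i j| * |X i j|) ≤ Q i j * X i j + θ * |X i j| := by
    intro i j
    have h := abs_le_abs_softThreshold_add (-Q i j) hθ
    rw [abs_neg] at h
    have hprod : -(Q i j * X i j) ≤ |Q i j| * |X i j| := by
      rw [← abs_mul]; exact neg_le_abs _
    rw [soft_apply, Matrix.neg_apply]
    nlinarith [hprod, mul_le_mul_of_nonneg_right h (abs_nonneg (X i j))]
  calc -(frob (soft θ (-Q)) * frob X)
      ≤ -∑ i, ∑ j, |soft θ (-Q) i j| * |X i j| :=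
        neg_le_neg (sum_abs_mul_abs_le_frob_mul_frob _ _)
    _ = ∑ i, ∑ j, -(|soft θ (-Q) i j| * |X i j|) := by simp only [Finset.sum_neg_distrib]
    _ ≤ ∑ i, ∑ j, (Q i j * X i j + θ * |X i j|) :=
        Finset.sum_le_sum fun i _ => Finset.sum_le_sum fun j _ => hentry i j
    _ = mip Q X + θ * l1 X := by
        simp only [mip, l1, Finset.sum_add_distrib, Finset.mul_sum]

lemma mip_soft_neg_add_mul_l1 (θ : ℝ) (Q : Matrix (Fin A) (Fin B) ℝ) :
    mip Q (soft θ (-Q)) + θ * l1 (soft θ (-Q)) = -frob (soft θ (-Q)) ^ 2 := by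
  simp only [frob_sq, mip, l1, Finset.mul_sum, ← Finset.sum_add_distrib, ← Finset.sum_neg_distrib,
    soft_apply, Matrix.neg_apply]
  refine Finset.sum_congr rfl fun i _ => Finset.sum_congr rfl fun j _ => ?_
  linear_combination -mul_softThreshold_sub_mul_abs (-Q i j) θ

end Matrix

/-- Minimization of `⟨Q,X⟩ + t₀‖X‖₁` over the Frobenius ball of radius `t`:
the minimum equals `-t‖S_{t₀}(-Q)‖_F`, attained (when `‖S_{t₀}(-Q)‖_F ≠ 0`) at
`X* = t S_{t₀}(-Q)/‖S_{t₀}(-Q)‖_F`. -/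
theorem stmt5 {A B : ℕ} (Q : Matrix (Fin A) (Fin B) ℝ)
    (t₀ : ℝ) (ht₀ : 0 < t₀) (t : ℝ) (ht : 0 ≤ t) :
    (∀ X : Matrix (Fin A) (Fin B) ℝ, frob X ≤ t →
      -t * frob (soft t₀ (-Q)) ≤ mip Q X + t₀ * l1 X) ∧
    (frob (soft t₀ (-Q)) ≠ 0 →
      frob ((t / frob (soft t₀ (-Q))) • soft t₀ (-Q)) ≤ t ∧
      mip Q ((t / frob (soft t₀ (-Q))) • soft t₀ (-Q)) +
          t₀ * l1 ((t / frob (soft t₀ (-Q))) • soft t₀ (-Q)) =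
        -t * frob (soft t₀ (-Q))) := by
  set S := soft t₀ (-Q)
  refine ⟨fun X hX => ?_, fun hS => ?_⟩
  · calc -t * frob S ≤ -(frob S * frob X) := by nlinarith [frob_nonneg S]
      _ ≤ mip Q X + t₀ * l1 X := neg_frob_soft_neg_mul_frob_le ht₀.le Q X
  · have hc : 0 ≤ t / frob S := div_nonneg ht (frob_nonneg S)
    have hvalue : mip Q S + t₀ * l1 S = -frob S ^ 2 := mip_soft_neg_add_mul_l1 t₀ Q
    rw [frob_smul hc, mip_smul_right, l1_smul hc, div_mul_cancel₀ _ hS]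
    refine ⟨le_rfl, ?_⟩
    calc t / frob S * mip Q S + t₀ * (t / frob S * l1 S)
        = t / frob S * (mip Q S + t₀ * l1 S) := by ring
      _ = -t * frob S := by rw [hvalue]; field_simp
end

section
/- Let H₃(W) = ((‖W‖² + 1)/(N+1))^{(N+1)/2} on ℝᵈ for an odd integer N ≥ 3. Then for all W, H ∈ ℝᵈ: (1/(N+1)^{(N-1)/2}) ‖H‖² (‖W‖² + 1)^{(N-1)/2} ≤ ⟨H, ∇²H₃(W) H⟩ ≤ (N/(N+1)^{(N-1)/2}) ‖H‖² (‖W‖² + 1)^{(N-1)/2}. -/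
/-!
`H₃` is the radial function `ψ (‖W‖²)` with `ψ t = ((t + 1) / (N + 1)) ^ ((N + 1) / 2)`,
whose Hessian is `∇²H₃(W)[H, H] = 2 ψ'(‖W‖²) ‖H‖² + 4 ψ''(‖W‖²) ⟪W, H⟫²`.
Both terms are nonnegative, which gives the lower bound, and Cauchy–Schwarz
`⟪W, H⟫² ≤ (‖W‖² + 1) ‖H‖²` bounds the second one by `N - 1` times the first.
-/

open scoped RealInnerProductSpace

theorem hasDerivAt_add_one_div_pow {𝕜 : Type*} [NontriviallyNormedField 𝕜] (c : 𝕜) (m : ℕ)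
    (t : 𝕜) :
    HasDerivAt (fun t => ((t + 1) / c) ^ m) (m / c * ((t + 1) / c) ^ (m - 1)) t := by
  refine (((hasDerivAt_id t).add_const 1).div_const c).fun_pow m |>.congr_deriv ?_
  simp only [id]
  ring

section RadialFunction

variable {E : Type*} [NormedAddCommGroup E] [InnerProductSpace ℝ E] {ψ ψ' : ℝ → ℝ}

theorem hasFDerivAt_comp_norm_sq {w : E} (hψ : HasDerivAt ψ (ψ' (‖w‖ ^ 2)) (‖w‖ ^ 2)) :
    HasFDerivAt (fun w : E => ψ (‖w‖ ^ 2)) ((2 * ψ' (‖w‖ ^ 2)) • innerSL ℝ w) w := by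
  refine (hψ.comp_hasFDerivAt w (hasStrictFDerivAt_norm_sq w).hasFDerivAt).congr_fderiv ?_
  module

theorem fderiv_comp_norm_sq (hψ : ∀ t, HasDerivAt ψ (ψ' t) t) :
    fderiv ℝ (fun w : E => ψ (‖w‖ ^ 2)) = fun w => (2 * ψ' (‖w‖ ^ 2)) • innerSL ℝ w :=
  funext fun _ => (hasFDerivAt_comp_norm_sq (hψ _)).fderiv

theorem fderiv_fderiv_comp_norm_sq_apply (hψ : ∀ t, HasDerivAt ψ (ψ' t) t) {w : E} {ψ'' : ℝ}
    (hψ' : HasDerivAt ψ' ψ'' (‖w‖ ^ 2)) (h : E) :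
    fderiv ℝ (fderiv ℝ fun w : E => ψ (‖w‖ ^ 2)) w h h =
      2 * ψ' (‖w‖ ^ 2) * ‖h‖ ^ 2 + 4 * ψ'' * ⟪w, h⟫ ^ 2 := by
  have hcoeff := (hasFDerivAt_comp_norm_sq (ψ' := fun _ => ψ'') hψ').const_mul 2
  rw [fderiv_comp_norm_sq hψ, (hcoeff.fun_smul (innerSL ℝ (E := E)).hasFDerivAt).fderiv]
  simp only [add_apply, smul_apply, ContinuousLinearMap.smulRight_apply, smul_eq_mul]
  -- the terms coming from `(innerSL ℝ).hasFDerivAt` carry other module instances, so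
  -- `innerSL_apply_apply` does not fire and they are unfolded by defeq
  change 2 * ψ' (‖w‖ ^ 2) * ⟪h, h⟫ + 2 * (2 * ψ'' * ⟪w, h⟫) * ⟪w, h⟫ = _
  rw [real_inner_self_eq_norm_sq]
  ring

theorem fderiv_fderiv_norm_sq_add_one_div_pow_apply (k : ℕ) (w h : E) :
    fderiv ℝ (fderiv ℝ fun w : E => ((‖w‖ ^ 2 + 1) / (2 * (k + 1))) ^ (k + 1)) w h h =
      ((‖w‖ ^ 2 + 1) / (2 * (k + 1))) ^ k * ‖h‖ ^ 2 +
        k * ((‖w‖ ^ 2 + 1) / (2 * (k + 1))) ^ (k - 1) * ⟪w, h⟫ ^ 2 / (k + 1) := by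
  rw [fderiv_fderiv_comp_norm_sq_apply (fun t => hasDerivAt_add_one_div_pow _ (k + 1) t)
    ((hasDerivAt_add_one_div_pow _ k _).const_mul _)]
  field_simp
  push_cast
  ring

end RadialFunction

theorem natCast_mul_pow_sub_one_mul {R : Type*} [Semiring R] (k : ℕ) (x : R) :
    (k : R) * x ^ (k - 1) * x = k * x ^ k := by
  rcases k with _ | k <;> simp [pow_succ, mul_assoc]

theorem pow_mul_add_mul_pow_sub_one_mul_div_le (k : ℕ) {x p a : ℝ} (hx : 0 ≤ x)
    (ha : a ^ 2 ≤ 2 * (k + 1) * x * p) :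
    x ^ k * p + k * x ^ (k - 1) * a ^ 2 / (k + 1) ≤ (2 * k + 1) * (x ^ k * p) := by
  have hcoeff : 0 ≤ (k : ℝ) * x ^ (k - 1) := by positivity
  have hsecond : k * x ^ (k - 1) * a ^ 2 / (k + 1) ≤ 2 * k * (x ^ k * p) := by
    rw [div_le_iff₀ (by positivity)]
    calc (k : ℝ) * x ^ (k - 1) * a ^ 2 ≤ k * x ^ (k - 1) * (2 * (k + 1) * x * p) :=
          mul_le_mul_of_nonneg_left ha hcoeff
      _ = 2 * (k * x ^ (k - 1) * x) * p * (k + 1) := by ring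
      _ = 2 * k * (x ^ k * p) * (k + 1) := by rw [natCast_mul_pow_sub_one_mul]; ring
  linarith

theorem stmt12_general {d : ℕ} (N : ℕ) (hNo : Odd N)
    (H₃ : EuclideanSpace ℝ (Fin d) → ℝ)
    (hH₃ : H₃ = fun W => ((‖W‖ ^ 2 + 1) / ((N : ℝ) + 1)) ^ ((N + 1) / 2)) :
    ∀ W H : EuclideanSpace ℝ (Fin d),
      (1 / ((N : ℝ) + 1) ^ ((N - 1) / 2)) * ‖H‖ ^ 2 * (‖W‖ ^ 2 + 1) ^ ((N - 1) / 2) ≤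
          fderiv ℝ (fderiv ℝ H₃) W H H ∧
        fderiv ℝ (fderiv ℝ H₃) W H H ≤
          ((N : ℝ) / ((N : ℝ) + 1) ^ ((N - 1) / 2)) * ‖H‖ ^ 2 * (‖W‖ ^ 2 + 1) ^ ((N - 1) / 2) := by
  obtain ⟨k, rfl⟩ := hNo
  intro W H
  have hc : ((2 * k + 1 : ℕ) : ℝ) + 1 = 2 * (k + 1) := by push_cast; ring
  rw [show (2 * k + 1 + 1) / 2 = k + 1 by omega, hc] at hH₃
  rw [show (2 * k + 1 - 1) / 2 = k by omega, hc, hH₃, fderiv_fderiv_norm_sq_add_one_div_pow_apply]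
  set x := (‖W‖ ^ 2 + 1) / (2 * ((k : ℝ) + 1))
  have hx : ∀ m : ℝ, m / (2 * ((k : ℝ) + 1)) ^ k * ‖H‖ ^ 2 * (‖W‖ ^ 2 + 1) ^ k =
      m * (x ^ k * ‖H‖ ^ 2) := fun m => by rw [div_pow]; ring
  have hCS : ⟪W, H⟫ ^ 2 ≤ 2 * (k + 1) * x * ‖H‖ ^ 2 := by
    rw [mul_div_cancel₀ _ (by positivity), sq, add_one_mul]
    have := real_inner_mul_inner_self_le W H
    rw [real_inner_self_eq_norm_sq, real_inner_self_eq_norm_sq] at this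
    linarith [sq_nonneg ‖H‖]
  rw [hx, hx, one_mul]
  push_cast
  exact ⟨le_add_of_nonneg_right (by positivity),
    pow_mul_add_mul_pow_sub_one_mul_div_le k (by positivity) hCS⟩

/-- Two-sided Hessian bounds for `H₃(W) = ((‖W‖²+1)/(N+1))^{(N+1)/2}`, `N ≥ 3` odd. -/
theorem stmt12 {d : ℕ} (N : ℕ) (hNo : Odd N) (hN : 3 ≤ N)
    (H₃ : EuclideanSpace ℝ (Fin d) → ℝ)
    (hH₃ : H₃ = fun W => ((‖W‖ ^ 2 + 1) / ((N : ℝ) + 1)) ^ ((N + 1) / 2)) :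
    ∀ W H : EuclideanSpace ℝ (Fin d),
      (1 / ((N : ℝ) + 1) ^ ((N - 1) / 2)) * ‖H‖ ^ 2 * (‖W‖ ^ 2 + 1) ^ ((N - 1) / 2) ≤
          fderiv ℝ (fderiv ℝ H₃) W H H ∧
        fderiv ℝ (fderiv ℝ H₃) W H H ≤
          ((N : ℝ) / ((N : ℝ) + 1) ^ ((N - 1) / 2)) * ‖H‖ ^ 2 * (‖W‖ ^ 2 + 1) ^ ((N - 1) / 2) :=
  stmt12_general N hNo H₃ hH₃
end

section
/- Let H₃(W) = ((‖W‖² + 1)/(N+1))^{(N+1)/2} on ℝᵈ, N ≥ 3 odd. Then H₃ is σ-strongly convex with σ = 1/(N+1)^{(N-1)/2}, i.e. W ↦ H₃(W) - (σ/2)‖W‖² is convex. -/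
/-!
Write `N = 2k + 1` and `m = k + 1`, so `σ / 2 = m / (N + 1) ^ m`. Then
`(N + 1) ^ m • (H₃ W - (σ / 2) ‖W‖²) = (‖W‖² + 1) ^ m - m ‖W‖²`, and by the binomial theorem the
right-hand side is a combination of the powers `‖W‖ ^ (2 j)`, `j ≠ 1`, with nonnegative
coefficients: the subtracted quadratic term exactly cancels the linear term of the expansion.
Each power of the convex nonnegative function `‖W‖²` is convex.
-/

open Finset

section

variable {𝕜 E β ι : Type*} [Semiring 𝕜] [PartialOrder 𝕜] [AddCommMonoid E] [SMul 𝕜 E]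
  [AddCommMonoid β] [PartialOrder β] [IsOrderedAddMonoid β] [Module 𝕜 β] {s : Set E}

theorem ConvexOn.finset_sum {t : Finset ι} {f : ι → E → β} (hs : Convex 𝕜 s)
    (hf : ∀ i ∈ t, ConvexOn 𝕜 s (f i)) : ConvexOn 𝕜 s (∑ i ∈ t, f i) :=
  Finset.sum_induction f (ConvexOn 𝕜 s) (fun _ _ => ConvexOn.add) (convexOn_const 0 hs) hf

end

theorem add_one_pow_eq_mul_add_sum_erase {R : Type*} [CommSemiring R] (t : R) (m : ℕ) :
    (t + 1) ^ m = m * t + ∑ j ∈ (range (m + 1)).erase 1, (m.choose j : R) * t ^ j := by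
  rcases m with _ | m
  · simp
  · rw [add_pow, ← add_sum_erase _ _ (by simp : 1 ∈ range (m + 2))]
    simp [mul_comm]

section

variable {𝕜 E : Type*} [CommRing 𝕜] [LinearOrder 𝕜] [IsStrictOrderedRing 𝕜]
  [AddCommGroup E] [Module 𝕜 E] {s : Set E} {f : E → 𝕜}

theorem ConvexOn.add_one_pow_sub_mul (hf : ConvexOn 𝕜 s f) (hf₀ : ∀ ⦃x⦄, x ∈ s → 0 ≤ f x)
    (m : ℕ) : ConvexOn 𝕜 s (fun x => (f x + 1) ^ m - m * f x) := by
  have hsum : ConvexOn 𝕜 s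
      (∑ j ∈ (range (m + 1)).erase 1, fun x => (m.choose j : 𝕜) * f x ^ j) :=
    ConvexOn.finset_sum hf.1 fun j _ => (hf.pow hf₀ j).smul (Nat.cast_nonneg _)
  refine hsum.congr fun x _ => ?_
  simp [add_one_pow_eq_mul_add_sum_erase]

end

theorem stmt13_general {d : ℕ} (N : ℕ) (hNo : Odd N)
    (H₃ : EuclideanSpace ℝ (Fin d) → ℝ)
    (hH₃ : H₃ = fun W => ((‖W‖ ^ 2 + 1) / ((N : ℝ) + 1)) ^ ((N + 1) / 2)) :
    ConvexOn ℝ Set.univ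
      (fun W : EuclideanSpace ℝ (Fin d) =>
        H₃ W - ((1 / ((N : ℝ) + 1) ^ ((N - 1) / 2)) / 2) * ‖W‖ ^ 2) := by
  obtain ⟨k, rfl⟩ := hNo
  subst hH₃
  have hnormsq : ConvexOn ℝ Set.univ (fun W : EuclideanSpace ℝ (Fin d) => ‖W‖ ^ 2) :=
    (convexOn_univ_norm.pow fun W _ => norm_nonneg W) 2
  have hscaled := (hnormsq.add_one_pow_sub_mul (fun W _ => by positivity) (k + 1)).smul
    (inv_nonneg.2 (by positivity : (0 : ℝ) ≤ (2 * k + 2) ^ (k + 1)))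
  refine hscaled.congr fun W _ => ?_
  rw [show (2 * k + 1 + 1) / 2 = k + 1 by omega, show (2 * k + 1 - 1) / 2 = k by omega]
  have hNcast : ((2 * k + 1 : ℕ) : ℝ) + 1 = 2 * k + 2 := by push_cast; ring
  have hmcast : ((k + 1 : ℕ) : ℝ) = (2 * k + 2) / 2 := by push_cast; ring
  simp only [hNcast, hmcast, smul_eq_mul, div_pow, pow_succ]
  field_simp

/-- `H₃(W) = ((‖W‖²+1)/(N+1))^{(N+1)/2}` is `σ`-strongly convex with
`σ = 1/(N+1)^{(N-1)/2}`, i.e. `W ↦ H₃(W) - (σ/2)‖W‖²` is convex. -/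
theorem stmt13 {d : ℕ} (N : ℕ) (hNo : Odd N) (hN : 3 ≤ N)
    (H₃ : EuclideanSpace ℝ (Fin d) → ℝ)
    (hH₃ : H₃ = fun W => ((‖W‖ ^ 2 + 1) / ((N : ℝ) + 1)) ^ ((N + 1) / 2)) :
    ConvexOn ℝ Set.univ
      (fun W : EuclideanSpace ℝ (Fin d) =>
        H₃ W - ((1 / ((N : ℝ) + 1) ^ ((N - 1) / 2)) / 2) * ‖W‖ ^ 2) :=
  stmt13_general N hNo H₃ hH₃
end

section
/- Let h(W₁,W₂) = 3((‖W₁‖²_F + ‖W₂‖²_F)/2)² + ‖Y‖_F (‖W₁‖²_F + ‖W₂‖²_F)/2 for a fixed matrix Y. For points x^k, x^{k-1} in the product matrix space and y^k = x^k + γ(x^k - x^{k-1}) with γ ∈ [0,1], one has D_h(x^k, y^k) ≤ 9γ²(‖x^k‖² + ‖Y‖_F/18)‖x^k - x^{k-1}‖² + 6γ⁴‖x^k - x^{k-1}‖⁴, where ‖·‖ is the product Frobenius norm. -/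
/-! With `q(W₁, W₂) = (‖W₁‖² + ‖W₂‖²) / 2`, half the squared norm of the `L²` product, the kernel
is `h = 3 q² + ‖Y‖ q`. For a quadratic function of `q` the Bregman distance splits exactly as
`D_h(x, y) = 3 (q x - q y)² + (6 q y + ‖Y‖) D_q(x, y)`, and `D_q(x, y) = ‖x - y‖² / 2`.
For `y = x + γ d` both terms are polynomials in `γ`, `‖x‖²`, `‖d‖²` and `⟪x, d⟫`, and the bound
reduces to Cauchy–Schwarz `⟪x, d⟫² ≤ ‖x‖² ‖d‖²` plus a sum-of-squares estimate. -/

attribute [local instance] Matrix.frobeniusNormedAddCommGroup Matrix.frobeniusNormedSpace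

open scoped RealInnerProductSpace

section Bregman

variable {G : Type*} [NormedAddCommGroup G] [NormedSpace ℝ G]

noncomputable def bregman (f : G → ℝ) (x y : G) : ℝ :=
  f x - f y - fderiv ℝ f y (x - y)

theorem bregman_comp_continuousLinearEquiv {H : Type*} [NormedAddCommGroup H] [NormedSpace ℝ H]
    (L : G ≃L[ℝ] H) (f : H → ℝ) (x y : G) :
    bregman (f ∘ L) x y = bregman f (L x) (L y) := by
  simp only [bregman, L.comp_right_fderiv, ContinuousLinearMap.comp_apply,
    ContinuousLinearEquiv.coe_coe, map_sub, Function.comp_apply]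

theorem bregman_quadratic_comp {f : G → ℝ} {y : G} (hf : DifferentiableAt ℝ f y)
    (α β : ℝ) (x : G) :
    bregman (fun p => α * f p ^ 2 + β * f p) x y =
      α * (f x - f y) ^ 2 + (2 * α * f y + β) * bregman f x y := by
  have hderiv : HasFDerivAt (fun p => α * f p ^ 2 + β * f p)
      ((2 * α * f y + β) • fderiv ℝ f y) y := by
    refine (((hf.hasFDerivAt.pow 2).const_mul α).add (hf.hasFDerivAt.const_mul β)).congr_fderiv ?_
    ext v
    simp only [Nat.add_one_sub_one, pow_one, nsmul_eq_mul, Nat.cast_ofNat, add_apply, smul_apply,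
      smul_eq_mul]
    ring
  rw [bregman, bregman, hderiv.fderiv, smul_apply, smul_eq_mul]
  ring

end Bregman

section HalfNormSq

variable {H : Type*} [NormedAddCommGroup H] [InnerProductSpace ℝ H]

theorem hasFDerivAt_half_norm_sq (y : H) :
    HasFDerivAt (fun u : H => ‖u‖ ^ 2 / 2) (innerSL ℝ y) y := by
  simp_rw [div_eq_mul_inv]
  refine ((hasStrictFDerivAt_norm_sq y).hasFDerivAt.mul_const (2 : ℝ)⁻¹).congr_fderiv ?_
  ext v
  simp only [smul_apply, coe_innerSL_apply, nsmul_eq_mul, Nat.cast_ofNat, smul_eq_mul]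
  ring

theorem bregman_half_norm_sq (x y : H) :
    bregman (fun u => ‖u‖ ^ 2 / 2) x y = ‖x - y‖ ^ 2 / 2 := by
  rw [bregman, (hasFDerivAt_half_norm_sq y).fderiv, innerSL_apply_apply]
  conv_lhs => rw [← add_sub_cancel y x, norm_add_sq_real, add_sub_cancel_left]
  ring

theorem bregman_quartic_kernel_le (β γ : ℝ) (u d : H) :
    bregman (fun v => 3 * (‖v‖ ^ 2 / 2) ^ 2 + β * (‖v‖ ^ 2 / 2)) u (u + γ • d) ≤
      9 * γ ^ 2 * (‖u‖ ^ 2 + β / 18) * ‖d‖ ^ 2 + 6 * γ ^ 4 * (‖d‖ ^ 2) ^ 2 := by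
  rw [bregman_quadratic_comp (hasFDerivAt_half_norm_sq _).differentiableAt, bregman_half_norm_sq,
    sub_add_cancel_left, norm_neg, norm_add_sq_real, inner_smul_right, norm_smul, mul_pow,
    Real.norm_eq_abs, sq_abs]
  have hcs : ⟪u, d⟫ ^ 2 ≤ ‖u‖ ^ 2 * ‖d‖ ^ 2 := by
    rw [← mul_pow, ← sq_abs]
    exact pow_le_pow_left₀ (abs_nonneg _) (abs_real_inner_le_norm u d) 2
  -- the difference of the two sides is
  -- `3 (γ⟪u,d⟫ - γ²‖d‖²)² + 6γ² (‖u‖²‖d‖² - ⟪u,d⟫²) + (3/2) γ²‖u‖²‖d‖² + (3/4) γ⁴‖d‖⁴`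
  linarith [sq_nonneg (γ * ⟪u, d⟫ - γ ^ 2 * ‖d‖ ^ 2), mul_nonneg (sq_nonneg γ) (sub_nonneg.2 hcs),
    mul_nonneg (sq_nonneg γ) (mul_nonneg (sq_nonneg ‖u‖) (sq_nonneg ‖d‖)),
    sq_nonneg (γ ^ 2 * ‖d‖ ^ 2)]

end HalfNormSq

-- The Frobenius norm is by definition the `L²` norm of the nested `PiLp 2` vector of entries.
noncomputable abbrev Matrix.frobeniusInnerProductSpace (m n : Type*) [Fintype m] [Fintype n] :
    InnerProductSpace ℝ (Matrix m n ℝ) :=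
  InnerProductSpace.ofNorm ℝ fun A B => by
    have := parallelogram_law_with_norm ℝ
      (WithLp.toLp 2 fun i => WithLp.toLp 2 (A i)) (WithLp.toLp 2 fun i => WithLp.toLp 2 (B i))
    simp only [sq] at this
    exact this

attribute [local instance] Matrix.frobeniusInnerProductSpace

theorem stmt19_general {a b c e m n : ℕ}
    (Y : Matrix (Fin m) (Fin n) ℝ)
    (h : Matrix (Fin a) (Fin b) ℝ × Matrix (Fin c) (Fin e) ℝ → ℝ)
    (hdef : h = fun p =>
      3 * ((‖p.1‖ ^ 2 + ‖p.2‖ ^ 2) / 2) ^ 2 + ‖Y‖ * ((‖p.1‖ ^ 2 + ‖p.2‖ ^ 2) / 2))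
    (n2 : Matrix (Fin a) (Fin b) ℝ × Matrix (Fin c) (Fin e) ℝ → ℝ)
    (hn2 : n2 = fun p => ‖p.1‖ ^ 2 + ‖p.2‖ ^ 2)
    (xk xk1 yk : Matrix (Fin a) (Fin b) ℝ × Matrix (Fin c) (Fin e) ℝ)
    (γ : ℝ)
    (hyk : yk = xk + γ • (xk - xk1)) :
    h xk - h yk - fderiv ℝ h yk (xk - yk) ≤
      9 * γ ^ 2 * (n2 xk + ‖Y‖ / 18) * n2 (xk - xk1) +
        6 * γ ^ 4 * (n2 (xk - xk1)) ^ 2 := by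
  set L := (WithLp.prodContinuousLinearEquiv 2 ℝ (Matrix (Fin a) (Fin b) ℝ)
    (Matrix (Fin c) (Fin e) ℝ)).symm
  have hL : ∀ p, ‖L p‖ ^ 2 = ‖p.1‖ ^ 2 + ‖p.2‖ ^ 2 := fun p => WithLp.prod_norm_sq_eq_of_L2 _
  have hh : h = (fun v => 3 * (‖v‖ ^ 2 / 2) ^ 2 + ‖Y‖ * (‖v‖ ^ 2 / 2)) ∘ L := by
    funext p
    simp only [hdef, Function.comp_apply, hL]
  have hLy : L yk = L xk + γ • L (xk - xk1) := by simp [L, hyk]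
  calc bregman h xk yk
      = bregman (fun v => 3 * (‖v‖ ^ 2 / 2) ^ 2 + ‖Y‖ * (‖v‖ ^ 2 / 2)) (L xk) (L yk) := by
        rw [hh]; exact bregman_comp_continuousLinearEquiv L _ xk yk
    _ ≤ 9 * γ ^ 2 * (‖L xk‖ ^ 2 + ‖Y‖ / 18) * ‖L (xk - xk1)‖ ^ 2 +
          6 * γ ^ 4 * (‖L (xk - xk1)‖ ^ 2) ^ 2 := hLy ▸ bregman_quartic_kernel_le _ _ _ _
    _ = _ := by simp only [hL, hn2]

/-- Bregman-distance bound for the matrix-factorization kernel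
`h(W₁,W₂) = 3((‖W₁‖²_F+‖W₂‖²_F)/2)² + ‖Y‖_F (‖W₁‖²_F+‖W₂‖²_F)/2`:
for `yᵏ = xᵏ + γ(xᵏ - xᵏ⁻¹)` with `γ ∈ [0,1]`,
`D_h(xᵏ, yᵏ) ≤ 9γ²(‖xᵏ‖² + ‖Y‖_F/18)‖xᵏ-xᵏ⁻¹‖² + 6γ⁴‖xᵏ-xᵏ⁻¹‖⁴`,
where `‖(W₁,W₂)‖² = ‖W₁‖²_F + ‖W₂‖²_F` is the product Frobenius norm. -/
theorem stmt19 {a b c e m n : ℕ}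
    (Y : Matrix (Fin m) (Fin n) ℝ)
    (h : Matrix (Fin a) (Fin b) ℝ × Matrix (Fin c) (Fin e) ℝ → ℝ)
    (hdef : h = fun p =>
      3 * ((‖p.1‖ ^ 2 + ‖p.2‖ ^ 2) / 2) ^ 2 + ‖Y‖ * ((‖p.1‖ ^ 2 + ‖p.2‖ ^ 2) / 2))
    (n2 : Matrix (Fin a) (Fin b) ℝ × Matrix (Fin c) (Fin e) ℝ → ℝ)
    (hn2 : n2 = fun p => ‖p.1‖ ^ 2 + ‖p.2‖ ^ 2)
    (xk xk1 yk : Matrix (Fin a) (Fin b) ℝ × Matrix (Fin c) (Fin e) ℝ)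
    (γ : ℝ) (hγ0 : 0 ≤ γ) (hγ1 : γ ≤ 1)
    (hyk : yk = xk + γ • (xk - xk1)) :
    h xk - h yk - fderiv ℝ h yk (xk - yk) ≤
      9 * γ ^ 2 * (n2 xk + ‖Y‖ / 18) * n2 (xk - xk1) +
        6 * γ ^ 4 * (n2 (xk - xk1)) ^ 2 :=
  stmt19_general Y h hdef n2 hn2 xk xk1 yk γ hyk
end
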